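/- With the setup of the stabilizer lemma (R a DVR with uniformizer π, α integral over R with minimal polynomial P, A = R[α], f ∈ R[X] monic with f̄ | P̄, P = fg + πT with T̄ ≠ 0, 𝔞 = πA + f(α)A, D̄ = gcd(f̄, ḡ, T̄)): the stabilizer Stab_L(𝔞) is a free R-module of rank deg P and the index [Stab_L(𝔞) : A]_R equals 𝔭^{deg D}. -/

import Mathlib

open Polynomial

/-- Polynomials over a field form a normalized GCD monoid in which `gcd` and `lcm` of nonzero
polynomials are monic. -/
noncomputable instance polyNormalizedGCDMonoid (K : Type*) [Field K] :
    NormalizedGCDMonoid (Polynomial K) :=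
  letI := Classical.decEq K
  UniqueFactorizationMonoid.toNormalizedGCDMonoid _

/-- The length of an `R`-module `M` (the Krull dimension of its submodule lattice).  For
`N ⊆ M` projective of the same finite rank over a DVR with maximal ideal `𝔭`, the index ideal
`[M : N]_R` is `𝔭 ^ length (M ⧸ N)`. -/
noncomputable def moduleLength (R M : Type*) [Semiring R] [AddCommGroup M] [Module R M] : ℕ∞ :=
  WithBot.unbotD 0 (Order.krullDim (Submodule R M))

/-!
Write `p̄` for reduction modulo `π`, `F = f̄`, `G = ḡ`, and `F = D̄ F₁`, so that
`P̄ = F G = D̄ (F₁ G)`. As `π ∈ 𝔞 ⊆ A`, every `x ∈ Stab(𝔞)` has `π x = h(α)` for some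
`h ∈ R[X]`, and `x` stabilizes `𝔞 = (π, f(α))` iff `x π, x f(α) ∈ 𝔞`. Using `P = f g + π T`,
these conditions give `F ∣ h̄ = G c̄` and `F ∣ T̄ c̄` for some `c`, hence `F₁ ∣ c̄`; conversely
`F₁ G ∣ h̄` suffices. So for a lift `E` of `F₁ G` and `ρ = E(α) / π` the stabilizer is `A + ρ A`,
and `q ↦ ρ q(α)` induces `k[X] ⧸ (D̄) ≃ Stab(𝔞) ⧸ A`, which has length `deg D`. Freeness and
the rank come from `A ⊆ Stab(𝔞) ⊆ π⁻¹ A`.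
-/

open IsLocalRing

theorem moduleLength_eq_length (R M : Type*) [Ring R] [AddCommGroup M] [Module R M] :
    moduleLength R M = Module.length R M := by
  rw [moduleLength, ← Module.coe_length]
  exact WithBot.unbotD_coe _ _

theorem Module.length_eq_of_surjective_of_ker_eq {R W M N : Type*} [Ring R] [AddCommGroup W]
    [Module R W] [AddCommGroup M] [Module R M] [AddCommGroup N] [Module R N] {φ : W →ₗ[R] M}
    {ψ : W →ₗ[R] N} (hφ : Function.Surjective φ) (hψ : Function.Surjective ψ)
    (h : LinearMap.ker φ = LinearMap.ker ψ) : Module.length R M = Module.length R N :=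
  (((φ.quotKerEquivOfSurjective hφ).symm.trans (Submodule.quotEquivOfEq _ _ h)).trans
    (ψ.quotKerEquivOfSurjective hψ)).length_eq

theorem AdjoinRoot.length_eq_natDegree {R k : Type*} [CommRing R] [Field k] [Algebra R k]
    (hk : Function.Surjective (algebraMap R k)) {d : k[X]} (hd : d.Monic) :
    Module.length R (AdjoinRoot d) = d.natDegree := by
  have : Module.Finite k (AdjoinRoot d) := (AdjoinRoot.powerBasis' hd).finite
  rw [Module.length_eq_of_surjective hk, Module.length_eq_finrank,
    (AdjoinRoot.powerBasis' hd).finrank, AdjoinRoot.powerBasis'_dim]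

theorem dvd_of_dvd_mul_of_dvd_mul_of_eq_gcd_mul {α : Type*} [CommMonoidWithZero α]
    [GCDMonoid α] {a b c x a₁ : α} (ha : a ≠ 0) (ha₁ : a = gcd a (gcd b c) * a₁)
    (hb : a ∣ b * x) (hc : a ∣ c * x) : a₁ ∣ x := by
  set m := gcd b c
  obtain ⟨a', m', ha', hm', hunit⟩ := extract_gcd a m
  set d := gcd a m
  have hd : d ≠ 0 := fun h => ha ((gcd_eq_zero_iff a m).1 h).1
  obtain rfl : a₁ = a' := mul_left_cancel₀ hd (ha₁.symm.trans ha')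
  have hmx : d * a₁ ∣ d * (m' * x) := by
    rw [← ha₁, ← mul_assoc, ← hm']
    exact (dvd_gcd hb hc).trans (gcd_mul_right' x b c).dvd
  exact (gcd_isUnit_iff_isRelPrime.1 hunit).dvd_of_dvd_mul_left ((mul_dvd_mul_iff_left hd).1 hmx)

theorem Submodule.exists_injective_of_forall_smul_mem {R V : Type*} [CommRing R] [IsDomain R]
    [AddCommGroup V] [Module R V] [Module.IsTorsionFree R V] {M N : Submodule R V} {r : R}
    (hr : r ≠ 0) (h : ∀ x ∈ N, r • x ∈ M) : ∃ φ : N →ₗ[R] M, Function.Injective φ :=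
  ⟨LinearMap.codRestrict M (r • N.subtype) fun x => h x x.2, fun _ _ hxy =>
    Subtype.ext (smul_right_injective V hr (congrArg Subtype.val hxy))⟩

theorem Submodule.finite_of_forall_smul_mem {R V : Type*} [CommRing R] [IsDomain R]
    [IsNoetherianRing R] [AddCommGroup V] [Module R V] [Module.IsTorsionFree R V]
    {M N : Submodule R V}
    [Module.Finite R M] {r : R} (hr : r ≠ 0) (h : ∀ x ∈ N, r • x ∈ M) : Module.Finite R N :=
  have ⟨φ, hφ⟩ := exists_injective_of_forall_smul_mem hr h
  Module.Finite.of_injective φ hφ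

theorem Submodule.finrank_eq_of_le_of_forall_smul_mem {R V : Type*} [CommRing R] [IsDomain R]
    [AddCommGroup V] [Module R V] [Module.IsTorsionFree R V] {M N : Submodule R V}
    [Module.Finite R M] [Module.Finite R N] (hMN : M ≤ N) {r : R} (hr : r ≠ 0)
    (h : ∀ x ∈ N, r • x ∈ M) : Module.finrank R N = Module.finrank R M :=
  let ⟨_, hφ⟩ := exists_injective_of_forall_smul_mem hr h
  le_antisymm (LinearMap.finrank_le_finrank_of_injective hφ) (Submodule.finrank_mono hMN)

section Reduction

variable {R : Type*} [CommRing R] [IsDomain R] [IsDiscreteValuationRing R] {π : R}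

theorem map_residue_eq_zero_iff (hπ : Irreducible π) {p : R[X]} :
    p.map (residue R) = 0 ↔ C π ∣ p := by
  simp only [Polynomial.ext_iff, coeff_map, coeff_zero, residue_eq_zero_iff, hπ.maximalIdeal_eq,
    Ideal.mem_span_singleton, C_dvd_iff_dvd_coeff]

theorem map_residue_C_eq_zero (hπ : Irreducible π) : (C π).map (residue R) = 0 :=
  (map_residue_eq_zero_iff hπ).2 dvd_rfl

theorem exists_eq_C_mul_add_mul_iff (hπ : Irreducible π) {p q : R[X]} :
    (∃ a b, p = C π * a + q * b) ↔ q.map (residue R) ∣ p.map (residue R) := by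
  constructor
  · rintro ⟨a, b, rfl⟩
    exact ⟨b.map (residue R), by simp [Polynomial.map_mul, map_residue_C_eq_zero hπ]⟩
  · rintro ⟨c, hc⟩
    obtain ⟨b, rfl⟩ := map_surjective _ residue_surjective c
    obtain ⟨a, ha⟩ := (map_residue_eq_zero_iff hπ).1
      (show (p - q * b).map (residue R) = 0 by simp [Polynomial.map_mul, hc])
    exact ⟨a, b, by linear_combination ha⟩

variable {f g T h : R[X]}

theorem dvd_map_residue_of_mul_eq (hπ : Irreducible π) (hf : f.Monic) {F₁ : (ResidueField R)[X]}
    (hF₁ : f.map (residue R) =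
      gcd (f.map (residue R)) (gcd (g.map (residue R)) (T.map (residue R))) * F₁)
    (hfh : f.map (residue R) ∣ h.map (residue R)) {a b c : R[X]}
    (hhf : h * f = C π * (C π * a + f * b) + (f * g + C π * T) * c) :
    F₁ * g.map (residue R) ∣ h.map (residue R) := by
  have hπ₀ := map_residue_C_eq_zero hπ
  have hF : f.map (residue R) ≠ 0 := (hf.map _).ne_zero
  have hw : f * (h - C π * b - g * c) = C π * (C π * a + T * c) := by linear_combination hhf
  obtain ⟨w, hw'⟩ : C π ∣ h - C π * b - g * c := by
    rw [← map_residue_eq_zero_iff hπ]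
    refine (mul_eq_zero.1 ?_).resolve_left hF
    simpa [Polynomial.map_mul, hπ₀] using congrArg (map (residue R)) hw
  have hfw : f * w = C π * a + T * c :=
    mul_left_cancel₀ (C_ne_zero.2 hπ.ne_zero) (by linear_combination hw - f * hw')
  have hh : h.map (residue R) = g.map (residue R) * c.map (residue R) := by
    simpa [Polynomial.map_mul, hπ₀, sub_eq_iff_eq_add] using congrArg (map (residue R)) hw'
  have hfT : f.map (residue R) ∣ T.map (residue R) * c.map (residue R) := ⟨w.map (residue R), by
    simpa [Polynomial.map_mul, hπ₀] using (congrArg (map (residue R)) hfw).symm⟩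
  rw [hh, mul_comm F₁]
  exact mul_dvd_mul_left _ (dvd_of_dvd_mul_of_dvd_mul_of_eq_gcd_mul hF hF₁ (hh ▸ hfh) hfT)

theorem exists_mul_eq_of_dvd_map_residue (hπ : Irreducible π) {d F₁ : (ResidueField R)[X]}
    (hF₁ : f.map (residue R) = d * F₁) (hdg : d ∣ g.map (residue R))
    (hdT : d ∣ T.map (residue R)) (hh : F₁ * g.map (residue R) ∣ h.map (residue R)) :
    f.map (residue R) ∣ h.map (residue R) ∧
      ∃ a b c, h * f = C π * (C π * a + f * b) + (f * g + C π * T) * c := by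
  obtain ⟨G₁, hG₁⟩ := hdg
  obtain ⟨T₁, hT₁⟩ := hdT
  obtain ⟨Q, hQ⟩ := hh
  obtain ⟨q, rfl⟩ := map_surjective _ residue_surjective Q
  obtain ⟨f₁, rfl⟩ := map_surjective _ residue_surjective F₁
  obtain ⟨t₁, rfl⟩ := map_surjective _ residue_surjective T₁
  refine ⟨⟨G₁ * q.map (residue R), by rw [hQ, hF₁, hG₁]; ring⟩, ?_⟩
  obtain ⟨v, hv⟩ := (map_residue_eq_zero_iff hπ).1
    (show (h - g * (f₁ * q)).map (residue R) = 0 by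
      simp only [Polynomial.map_sub, Polynomial.map_mul]; linear_combination hQ)
  obtain ⟨a, ha⟩ := (map_residue_eq_zero_iff hπ).1
    (show (f * (t₁ * q) - T * (f₁ * q)).map (residue R) = 0 by
      simp only [Polynomial.map_sub, Polynomial.map_mul]
      linear_combination q.map (residue R) * (t₁.map (residue R) * hF₁ - f₁.map (residue R) * hT₁))
  exact ⟨a, v - t₁ * q, f₁ * q, by linear_combination f * hv + C π * ha⟩

end Reduction

section Ideal

variable {R L : Type*} [CommRing R] [CommRing L] [Algebra R L]

noncomputable def piFIdeal (π : R) (f : R[X]) (α : L) : Submodule R L :=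
  Submodule.map (LinearMap.mulLeft R (algebraMap R L π))
      (Subalgebra.toSubmodule (Algebra.adjoin R {α})) ⊔
    Submodule.map (LinearMap.mulLeft R (aeval α f))
      (Subalgebra.toSubmodule (Algebra.adjoin R {α}))

variable {π : R} {f : R[X]} {α : L}

theorem mem_adjoin_singleton_iff_exists_aeval {x : L} :
    x ∈ Algebra.adjoin R {α} ↔ ∃ q : R[X], aeval α q = x := by
  rw [Algebra.adjoin_singleton_eq_range_aeval, AlgHom.mem_range]

theorem mem_piFIdeal_iff {x : L} : x ∈ piFIdeal π f α ↔
    ∃ u v : R[X], algebraMap R L π * aeval α u + aeval α f * aeval α v = x := by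
  simp only [piFIdeal, Submodule.mem_sup, Submodule.mem_map, Subalgebra.mem_toSubmodule,
    mem_adjoin_singleton_iff_exists_aeval, LinearMap.mulLeft_apply]
  aesop

theorem aeval_mul_mem_piFIdeal (q : R[X]) {y : L} (hy : y ∈ piFIdeal π f α) :
    aeval α q * y ∈ piFIdeal π f α := by
  obtain ⟨u, v, rfl⟩ := mem_piFIdeal_iff.1 hy
  exact mem_piFIdeal_iff.2 ⟨q * u, q * v, by simp only [map_mul]; ring⟩

theorem piFIdeal_le_adjoin : piFIdeal π f α ≤ Subalgebra.toSubmodule (Algebra.adjoin R {α}) := by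
  intro x hx
  obtain ⟨u, v, rfl⟩ := mem_piFIdeal_iff.1 hx
  exact mem_adjoin_singleton_iff_exists_aeval.2 ⟨C π * u + f * v, by simp⟩

theorem adjoin_le_piFIdeal_div :
    Subalgebra.toSubmodule (Algebra.adjoin R {α}) ≤ piFIdeal π f α / piFIdeal π f α := by
  intro x hx y hy
  obtain ⟨q, rfl⟩ := mem_adjoin_singleton_iff_exists_aeval.1 hx
  exact aeval_mul_mem_piFIdeal q hy

theorem mem_piFIdeal_div_iff_mul_mem {x : L} : x ∈ piFIdeal π f α / piFIdeal π f α ↔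
    x * algebraMap R L π ∈ piFIdeal π f α ∧ x * aeval α f ∈ piFIdeal π f α := by
  refine ⟨fun hx => ⟨hx _ (mem_piFIdeal_iff.2 ⟨1, 0, by simp⟩),
    hx _ (mem_piFIdeal_iff.2 ⟨0, 1, by simp⟩)⟩, fun ⟨hπ, hf⟩ y hy => ?_⟩
  obtain ⟨u, v, rfl⟩ := mem_piFIdeal_iff.1 hy
  rw [show x * (algebraMap R L π * aeval α u + aeval α f * aeval α v) =
    aeval α u * (x * algebraMap R L π) + aeval α v * (x * aeval α f) by ring]
  exact add_mem (aeval_mul_mem_piFIdeal u hπ) (aeval_mul_mem_piFIdeal v hf)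

end Ideal

section Stabilizer

variable {R L : Type*} [CommRing R] [IsDomain R] [IsDiscreteValuationRing R] [Field L]
  [Algebra R L] [FaithfulSMul R L] {π : R} {f : R[X]} {α : L}

theorem aeval_mem_piFIdeal_iff (hπ : Irreducible π) (hα : IsIntegral R α)
    (hfP : f.map (residue R) ∣ (minpoly R α).map (residue R)) {h : R[X]} :
    aeval α h ∈ piFIdeal π f α ↔ f.map (residue R) ∣ h.map (residue R) := by
  rw [mem_piFIdeal_iff, ← exists_eq_C_mul_add_mul_iff hπ]
  constructor
  · rintro ⟨u, v, huv⟩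
    obtain ⟨c, hc⟩ := (minpoly.isIntegrallyClosed_dvd_iff hα (h - (C π * u + f * v))).1
      (by simp [← huv])
    obtain ⟨a, b, hP⟩ := (exists_eq_C_mul_add_mul_iff hπ).2 hfP
    exact ⟨u + a * c, v + b * c, by linear_combination hc + c * hP⟩
  · rintro ⟨a, b, rfl⟩
    exact ⟨a, b, by simp⟩

theorem mem_piFIdeal_div_iff (hπ : Irreducible π) (hα : IsIntegral R α)
    (hfP : f.map (residue R) ∣ (minpoly R α).map (residue R)) {x : L} :
    x ∈ piFIdeal π f α / piFIdeal π f α ↔ ∃ h : R[X], algebraMap R L π * x = aeval α h ∧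
      f.map (residue R) ∣ h.map (residue R) ∧
      ∃ a b c, h * f = C π * (C π * a + f * b) + minpoly R α * c := by
  have hπL : algebraMap R L π ≠ 0 := by simpa using hπ.ne_zero
  rw [mem_piFIdeal_div_iff_mul_mem]
  constructor
  · rintro ⟨hxπ, hxf⟩
    obtain ⟨h, hh⟩ := mem_adjoin_singleton_iff_exists_aeval.1 (piFIdeal_le_adjoin hxπ)
    rw [← hh, aeval_mem_piFIdeal_iff hπ hα hfP] at hxπ
    obtain ⟨u, v, huv⟩ := mem_piFIdeal_iff.1 hxf
    obtain ⟨c, hc⟩ := (minpoly.isIntegrallyClosed_dvd_iff hα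
      (h * f - C π * (C π * u + f * v))).1 (by
        simp only [map_sub, map_mul, map_add, aeval_C, hh, huv]
        ring)
    exact ⟨h, by rw [hh, mul_comm], hxπ, u, v, c, by linear_combination hc⟩
  · rintro ⟨h, hx, hfh, a, b, c, hhf⟩
    refine ⟨by rwa [mul_comm, hx, aeval_mem_piFIdeal_iff hπ hα hfP], mem_piFIdeal_iff.2
      ⟨a, b, (mul_left_cancel₀ hπL ?_).symm⟩⟩
    calc algebraMap R L π * (x * aeval α f) = aeval α (h * f) := by
          rw [map_mul, ← hx, mul_assoc]
      _ = _ := by simp [hhf]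

theorem mem_piFIdeal_div_iff_dvd (hπ : Irreducible π) (hα : IsIntegral R α) (hf : f.Monic)
    (hfP : f.map (residue R) ∣ (minpoly R α).map (residue R)) {g T : R[X]}
    (hPfg : minpoly R α = f * g + C π * T) {F₁ : (ResidueField R)[X]}
    (hF₁ : f.map (residue R) =
      gcd (f.map (residue R)) (gcd (g.map (residue R)) (T.map (residue R))) * F₁) {x : L} :
    x ∈ piFIdeal π f α / piFIdeal π f α ↔ ∃ h : R[X],
      F₁ * g.map (residue R) ∣ h.map (residue R) ∧ algebraMap R L π * x = aeval α h := by
  rw [mem_piFIdeal_div_iff hπ hα hfP, hPfg]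
  constructor
  · rintro ⟨h, hx, hfh, a, b, c, hhf⟩
    exact ⟨h, dvd_map_residue_of_mul_eq hπ hf hF₁ hfh hhf, hx⟩
  · rintro ⟨h, hh, hx⟩
    exact ⟨h, hx, exists_mul_eq_of_dvd_map_residue hπ hF₁
      ((gcd_dvd_right _ _).trans (gcd_dvd_left _ _))
      ((gcd_dvd_right _ _).trans (gcd_dvd_right _ _)) hh⟩

theorem exists_dvd_map_residue_iff (hπ : Irreducible π) {E : R[X]} {ρ : L}
    (hρ : algebraMap R L π * ρ = aeval α E) {x : L} :
    (∃ h : R[X], E.map (residue R) ∣ h.map (residue R) ∧ algebraMap R L π * x = aeval α h) ↔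
      ∃ a b : R[X], aeval α a + ρ * aeval α b = x := by
  have hπL : algebraMap R L π ≠ 0 := by simpa using hπ.ne_zero
  simp_rw [← exists_eq_C_mul_add_mul_iff hπ]
  constructor
  · rintro ⟨h, ⟨a, b, rfl⟩, hx⟩
    refine ⟨a, b, mul_left_cancel₀ hπL ?_⟩
    rw [hx, mul_add, ← mul_assoc, hρ]
    simp
  · rintro ⟨a, b, rfl⟩
    exact ⟨C π * a + E * b, ⟨a, b, rfl⟩, by rw [mul_add, ← mul_assoc, hρ]; simp⟩

theorem mul_aeval_mem_adjoin_iff (hπ : Irreducible π) (hα : IsIntegral R α) {E : R[X]} {ρ : L}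
    (hρ : algebraMap R L π * ρ = aeval α E) {q : R[X]} :
    ρ * aeval α q ∈ Algebra.adjoin R {α} ↔
      (minpoly R α).map (residue R) ∣ (E * q).map (residue R) := by
  have hπL : algebraMap R L π ≠ 0 := by simpa using hπ.ne_zero
  rw [mem_adjoin_singleton_iff_exists_aeval, ← exists_eq_C_mul_add_mul_iff hπ]
  constructor
  · rintro ⟨u, hu⟩
    obtain ⟨c, hc⟩ := (minpoly.isIntegrallyClosed_dvd_iff hα (E * q - C π * u)).1 (by
      simp only [map_sub, map_mul, aeval_C, hu, ← hρ]
      ring)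
    exact ⟨u, c, by linear_combination hc⟩
  · rintro ⟨a, c, hEq⟩
    refine ⟨a, mul_left_cancel₀ hπL ?_⟩
    rw [← mul_assoc, hρ, ← map_mul, hEq]
    simp

theorem length_quotient_adjoin_eq_natDegree (hπ : Irreducible π) (hα : IsIntegral R α)
    {E : R[X]} {ρ : L} (hρ : algebraMap R L π * ρ = aeval α E) {d : (ResidueField R)[X]}
    (hd : d.Monic) (hPd : (minpoly R α).map (residue R) = E.map (residue R) * d)
    {S : Submodule R L} (hS : ∀ x, x ∈ S ↔ ∃ a b : R[X], aeval α a + ρ * aeval α b = x) :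
    Module.length R (S ⧸ (Subalgebra.toSubmodule (Algebra.adjoin R {α})).comap S.subtype) =
      d.natDegree := by
  have hE : E.map (residue R) ≠ 0 := fun hE =>
    ((minpoly.monic hα).map (residue R)).ne_zero (by rw [hPd, hE, zero_mul])
  let ψ : R[X] →ₗ[R] S := LinearMap.codRestrict S
    (LinearMap.mulLeft R ρ ∘ₗ (aeval α).toLinearMap) fun q => (hS _).2 ⟨0, q, by simp⟩
  let χ : R[X] →ₗ[R] AdjoinRoot d := ((AdjoinRoot.mkₐ d).restrictScalars R).toLinearMap ∘ₗ
    (mapAlg R (ResidueField R)).toLinearMap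
  have hχ (q : R[X]) : χ q = AdjoinRoot.mk d (q.map (residue R)) := by
    simp [χ, mapAlg_eq_map]
  rw [← AdjoinRoot.length_eq_natDegree residue_surjective hd]
  refine Module.length_eq_of_surjective_of_ker_eq (φ := Submodule.mkQ _ ∘ₗ ψ) (ψ := χ) ?_ ?_ ?_
  · intro z
    obtain ⟨⟨x, hx⟩, rfl⟩ := Submodule.mkQ_surjective _ z
    obtain ⟨a, b, rfl⟩ := (hS x).1 hx
    refine ⟨b, (Submodule.Quotient.eq _).2 ?_⟩
    simp [ψ]
  · intro z
    obtain ⟨p, rfl⟩ := AdjoinRoot.mk_surjective z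
    obtain ⟨q, rfl⟩ := map_surjective _ residue_surjective p
    exact ⟨q, hχ q⟩
  · ext q
    simp only [LinearMap.mem_ker, LinearMap.comp_apply, Submodule.mkQ_apply,
      Submodule.Quotient.mk_eq_zero, Submodule.mem_comap, hχ, AdjoinRoot.mk_eq_zero]
    rw [← mul_dvd_mul_iff_left hE, ← Polynomial.map_mul, ← hPd]
    exact mul_aeval_mem_adjoin_iff hπ hα hρ

end Stabilizer

theorem stmt6_general (R : Type*) [CommRing R] [IsDomain R] [IsDiscreteValuationRing R]
    (π : R) (hπ : Irreducible π)
    (K L : Type*) [Field K] [Field L] [Algebra R K] [IsFractionRing R K]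
    [Algebra K L] [Algebra R L] [IsScalarTower R K L]
    (α : L) (hα : IsIntegral R α)
    (P : R[X]) (hP : P = minpoly R α)
    (A : Subalgebra R L) (hA : A = Algebra.adjoin R {α})
    (f g T D : R[X]) (hf : f.Monic)
    (hfP : f.map (IsLocalRing.residue R) ∣ P.map (IsLocalRing.residue R))
    (hPfg : P = f * g + C π * T)
    (hD : D.Monic)
    (hDgcd : D.map (IsLocalRing.residue R) =
      gcd (f.map (IsLocalRing.residue R))
        (gcd (g.map (IsLocalRing.residue R)) (T.map (IsLocalRing.residue R))))
    (𝔞 : Submodule R L)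
    (h𝔞 : 𝔞 = Submodule.map (LinearMap.mulLeft R (algebraMap R L π))
        (Subalgebra.toSubmodule A) ⊔
      Submodule.map (LinearMap.mulLeft R (aeval α f)) (Subalgebra.toSubmodule A)) :
    Module.Free R ↥(𝔞 / 𝔞) ∧ Module.finrank R ↥(𝔞 / 𝔞) = P.natDegree ∧
      Subalgebra.toSubmodule A ≤ 𝔞 / 𝔞 ∧
      moduleLength R (↥(𝔞 / 𝔞) ⧸
          Submodule.comap (𝔞 / 𝔞 : Submodule R L).subtype (Subalgebra.toSubmodule A)) =
        (D.natDegree : ℕ∞) := by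
  subst hP hA
  obtain rfl : 𝔞 = piFIdeal π f α := h𝔞
  have : FaithfulSMul R L := (faithfulSMul_iff_algebraMap_injective R L).2 <| by
    rw [IsScalarTower.algebraMap_eq R K L]
    exact (algebraMap K L).injective.comp (IsFractionRing.injective R K)
  obtain ⟨F₁, hF₁⟩ := gcd_dvd_left (f.map (residue R))
    (gcd (g.map (residue R)) (T.map (residue R)))
  obtain ⟨E, hE⟩ := map_surjective _ residue_surjective (F₁ * g.map (residue R))
  obtain ⟨ρ, hρ⟩ : ∃ ρ, algebraMap R L π * ρ = aeval α E :=
    ⟨_, mul_inv_cancel_left₀ (by simpa using hπ.ne_zero) _⟩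
  have hS (x : L) : x ∈ piFIdeal π f α / piFIdeal π f α ↔
      ∃ a b : R[X], aeval α a + ρ * aeval α b = x := by
    rw [mem_piFIdeal_div_iff_dvd hπ hα hf hfP hPfg hF₁, ← exists_dvd_map_residue_iff hπ hρ, hE]
  have hPd : (minpoly R α).map (residue R) = E.map (residue R) * D.map (residue R) := by
    rw [hE, hDgcd, hPfg]
    simp only [Polynomial.map_add, Polynomial.map_mul, map_residue_C_eq_zero hπ, zero_mul, add_zero]
    linear_combination g.map (residue R) * hF₁
  have hπS (x : L) (hx : x ∈ piFIdeal π f α / piFIdeal π f α) :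
      π • x ∈ Subalgebra.toSubmodule (Algebra.adjoin R {α}) := by
    rw [Algebra.smul_def, mul_comm]
    exact piFIdeal_le_adjoin (hx _ (mem_piFIdeal_iff.2 ⟨1, 0, by simp⟩))
  have := Module.Finite.iff_fg.2 hα.fg_adjoin_singleton
  have := Submodule.finite_of_forall_smul_mem hπ.ne_zero hπS
  refine ⟨Module.free_of_finite_type_torsion_free', ?_, adjoin_le_piFIdeal_div, ?_⟩
  · rw [Submodule.finrank_eq_of_le_of_forall_smul_mem adjoin_le_piFIdeal_div hπ.ne_zero hπS]
    exact (Algebra.adjoin.powerBasis' hα).finrank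
  · rw [moduleLength_eq_length, length_quotient_adjoin_eq_natDegree hπ hα hρ (hD.map _) hPd hS,
      hD.natDegree_map]

/-- **Stabilizer lemma, part (iii).** With the setup of the stabilizer lemma
(`R` a DVR with uniformizer `π`, `α` integral over `R` with minimal polynomial `P`, `A = R[α]`,
`f ∈ R[X]` monic with `f̄ ∣ P̄`, `P = fg + πT` with `T̄ ≠ 0`, `𝔞 = πA + f(α)A`, and `D` a
monic lift of `D̄ = (f̄, ḡ, T̄)`): the stabilizer `Stab_L(𝔞) = (𝔞 : 𝔞)` is a free `R`-module
of rank `deg P` containing `A`, and `[Stab_L(𝔞) : A]_R = 𝔭 ^ deg D`, i.e.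
`length (Stab_L(𝔞) ⧸ A) = deg D`. -/
theorem stmt6 (R : Type*) [CommRing R] [IsDomain R] [IsDiscreteValuationRing R]
    (π : R) (hπ : Irreducible π)
    (K L : Type*) [Field K] [Field L] [Algebra R K] [IsFractionRing R K]
    [Algebra K L] [Algebra R L] [IsScalarTower R K L]
    [FiniteDimensional K L] [Algebra.IsSeparable K L]
    (α : L) (hα : IsIntegral R α) (hgen : Algebra.adjoin K {α} = ⊤)
    (P : R[X]) (hP : P = minpoly R α)
    (A : Subalgebra R L) (hA : A = Algebra.adjoin R {α})
    (f g T D : R[X]) (hf : f.Monic)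
    (hfP : f.map (IsLocalRing.residue R) ∣ P.map (IsLocalRing.residue R))
    (hPfg : P = f * g + C π * T)
    (hT : T.map (IsLocalRing.residue R) ≠ 0)
    (hD : D.Monic)
    (hDgcd : D.map (IsLocalRing.residue R) =
      gcd (f.map (IsLocalRing.residue R))
        (gcd (g.map (IsLocalRing.residue R)) (T.map (IsLocalRing.residue R))))
    (𝔞 : Submodule R L)
    (h𝔞 : 𝔞 = Submodule.map (LinearMap.mulLeft R (algebraMap R L π))
        (Subalgebra.toSubmodule A) ⊔
      Submodule.map (LinearMap.mulLeft R (aeval α f)) (Subalgebra.toSubmodule A)) :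
    Module.Free R ↥(𝔞 / 𝔞) ∧ Module.finrank R ↥(𝔞 / 𝔞) = P.natDegree ∧
      Subalgebra.toSubmodule A ≤ 𝔞 / 𝔞 ∧
      moduleLength R (↥(𝔞 / 𝔞) ⧸
          Submodule.comap (𝔞 / 𝔞 : Submodule R L).subtype (Subalgebra.toSubmodule A)) =
        (D.natDegree : ℕ∞) :=
  stmt6_general R π hπ K L α hα P hP A hA f g T D hf hfP hPfg hD hDgcd 𝔞 h𝔞
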